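/- For every N ≥ 3, the Boolean function Bav_N^0 : F_2^N → F_2 is balanced: the number of v ∈ F_2^N with Bav_N^0(v) = 1 equals 2^{N−1} (and hence so does the number of v with Bav_N^0(v) = 0). -/

import Mathlib

namespace Rhythm

/-- `a +_N b`, addition on `Z_N = {0,…,N−1}`. -/
def addN (N a b : ℕ) : ℕ := (a + b) % N

/-- `a −_N b`, subtraction on `Z_N = {0,…,N−1}`. -/
def subN (N a b : ℕ) : ℕ := (a + N - b) % N

/-- The discrete average `av(a,b) = a +_N ⌊(b −_N a)/2⌋`. -/
def av (N a b : ℕ) : ℕ := addN N a (subN N b a / 2)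

/-- The cyclic interval `[a,b]_{Z_N}`. -/
def cyclicIcc (N a b : ℕ) : Finset ℕ :=
  if a ≤ b then Finset.Icc a b else Finset.Icc a (N - 1) ∪ Finset.Icc 0 b

/-- The half-open cyclic interval `[a,b)_{Z_N} = [a,b]_{Z_N} \ {b}`. -/
def cyclicIco (N a b : ℕ) : Finset ℕ := (cyclicIcc N a b).erase b

/-- The half-open cyclic interval `(a,b]_{Z_N} = [a,b]_{Z_N} \ {a}`. -/
def cyclicIoc (N a b : ℕ) : Finset ℕ := (cyclicIcc N a b).erase a

/-- Cyclic successor `⟨i+1⟩_n` on `Fin n`. -/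
def csucc {n : ℕ} (i : Fin n) : Fin n := ⟨(i.val + 1) % n, Nat.mod_lt _ i.pos⟩

/-- Cyclic predecessor `⟨i−1⟩_n` on `Fin n`. -/
def cpred {n : ℕ} (i : Fin n) : Fin n := ⟨(i.val + (n - 1)) % n, Nat.mod_lt _ i.pos⟩

/-- `a ∈ R_N^n`: entries in `Z_N`, pairwise distinct, and `Σ_i (a_{⟨i+1⟩_n} −_N a_i) = N`. -/
def IsRhythm (N : ℕ) {n : ℕ} (a : Fin n → ℕ) : Prop :=
  (∀ i, a i < N) ∧ Function.Injective a ∧ (∑ i, subN N (a (csucc i)) (a i)) = N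

/-- The discrete average transformation `Rav`. -/
def Rav (N : ℕ) {n : ℕ} (a : Fin n → ℕ) : Fin n → ℕ := fun i => av N (a i) (a (csucc i))

/-- The rotation `rot(a_0,…,a_{n−1}) = (a_{n−1},a_0,…,a_{n−2})`. -/
def rot {n : ℕ} (a : Fin n → ℕ) : Fin n → ℕ := fun i => a (cpred i)

/-- The translation `tr(a_0,…,a_{n−1}) = (a_0 +_N 1,…,a_{n−1} +_N 1)`. -/
def tr (N : ℕ) {n : ℕ} (a : Fin n → ℕ) : Fin n → ℕ := fun i => addN N (a i) 1

/-- `j` is the jumping number of `a`: `a_{⟨j−1⟩_n} > a_j` and `a_{⟨k−1⟩_n} < a_k` for `k ≠ j`. -/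
def IsJump {n : ℕ} (a : Fin n → ℕ) (j : Fin n) : Prop :=
  a (cpred j) > a j ∧ ∀ k, k ≠ j → a (cpred k) < a k

/-- The map `Iav`: for `n ≥ 2` it is `Rav` if `a` is proper (`N − a_{n−1} > a_0`) and
`rot ∘ Rav` otherwise; for `n ≤ 1` it is the identity. -/
def Iav (N : ℕ) {n : ℕ} (a : Fin n → ℕ) : Fin n → ℕ :=
  if h : 2 ≤ n then
    if N - a ⟨n - 1, by omega⟩ > a ⟨0, by omega⟩ then Rav N a else rot (Rav N a)
  else a

/-- The support of a Boolean vector `v ∈ F_2^N`. -/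
def supp (N : ℕ) (v : Fin N → ZMod 2) : Finset (Fin N) :=
  Finset.univ.filter fun i => v i = 1

/-- `BtoI(v)`: the increasing enumeration of the support of `v`. -/
def BtoI (N : ℕ) (v : Fin N → ZMod 2) : Fin (supp N v).card → ℕ :=
  fun i => (((supp N v).orderIsoOfFin rfl) i).1.val

/-- `ItoB(b)`: the characteristic vector of the set of entries of the tuple `b`. -/
def ItoB (N : ℕ) {n : ℕ} (b : Fin n → ℕ) : Fin N → ZMod 2 :=
  fun i => if ∃ k, b k = i.val then 1 else 0

/-- The Boolean average `Bav = ItoB ∘ Iav ∘ BtoI : B_N → B_N`. -/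
def Bav (N : ℕ) (v : Fin N → ZMod 2) : Fin N → ZMod 2 :=
  ItoB N (Iav N (BtoI N v))

/-- The cyclic shift `Btr(v_0,…,v_{N−1}) = (v_{N−1},v_0,…,v_{N−2})`. -/
def Btr (N : ℕ) (v : Fin N → ZMod 2) : Fin N → ZMod 2 := fun i => v (cpred i)

/-- `Par_N`: the set of parental pairs of zero, i.e. pairs `(a,b) ∈ Z_N × Z_N` with `av(a,b) = 0`. -/
def Par (N : ℕ) : Finset (ℕ × ℕ) :=
  (Finset.range N ×ˢ Finset.range N).filter fun p => av N p.1 p.2 = 0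

/-- The least absolute remainder `φ_N(i) ∈ Z_{N,±}` of `i ∈ Z_N`. -/
def toSigned (N : ℕ) (i : Fin N) : ℤ :=
  if (i : ℕ) ≤ N / 2 then (i : ℤ) else (i : ℤ) - N

/-- `G_N(y) = Bav_N^0(v)` where `v_{⟨j⟩_N} = 1 + y_j` for `j ∈ Z_{N,±}`. -/
def G (N : ℕ) (y : ℤ → ZMod 2) : ZMod 2 :=
  if h : 0 < N then Bav N (fun i => 1 + y (toSigned N i)) ⟨0, h⟩ else 0

end Rhythm

/-!
Let `a₀ < ⋯ < a_{n-1}` be the support of `v`. For `n ≥ 2` the entries of `Iav a` are, up to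
rotation, the averages of the cyclically consecutive pairs `(aₖ, aₖ₊₁)`, and such an average is `0`
only for the pair `(0, 1)` or for the wrap-around pair `(a_{n-1}, a₀)` with
`a₀ ∈ {N - a_{n-1}, N - a_{n-1} + 1}`; for `n = 1` it happens only for `v = e₀`. Hence
`Bav_N^0(v) = 1` exactly when `v = e₀`, or `v₀ = v₁ = 1` (`2^{N-2}` vectors), or the first and last
ones of `v` sit at `⌈m/2⌉` and `N - ⌊m/2⌋` for some `2 ≤ m ≤ N - 1`, leaving the `N - 1 - m` points
in between free (`2^{N-1-m}` vectors). These families are disjoint and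
`1 + 2^{N-2} + (2^{N-2} - 1) = 2^{N-1}`.
-/

namespace Rhythm

open Finset

theorem card_filter_forall_notMem_eq {ι α : Type*} [Fintype ι] [DecidableEq ι] [Fintype α]
    (F : Finset ι) (g : ι → α)
    [DecidablePred fun v : ι → α => ∀ i ∉ F, v i = g i] :
    #{v : ι → α | ∀ i ∉ F, v i = g i} = Fintype.card α ^ #F := by
  have : ({v : ι → α | ∀ i ∉ F, v i = g i} : Finset _) =
      Fintype.piFinset fun i => if i ∈ F then univ else {g i} := by
    ext v
    simp only [mem_filter, mem_univ, true_and, Fintype.mem_piFinset]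
    refine forall_congr' fun i => ?_
    split_ifs with hi <;> simp [hi]
  rw [this, Fintype.card_piFinset]
  simp only [apply_ite card, card_singleton, card_univ]
  rw [prod_ite, prod_const_one, mul_one, prod_const, filter_mem_eq_inter, univ_inter]

theorem av_eq_zero_iff {N x y : ℕ} (hx : x < N) (hy : y < N) :
    av N x y = 0 ↔ (x = 0 ∧ y ≤ 1) ∨ (y < x ∧ (y = N - x ∨ y = N - x + 1)) := by
  unfold av addN subN
  rcases le_or_gt x y with hxy | hxy
  · have hsub : (y + N - x) % N = y - x := by
      rw [show y + N - x = y - x + N by omega, Nat.add_mod_right, Nat.mod_eq_of_lt (by omega)]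
    rw [hsub, Nat.mod_eq_of_lt (by omega)]
    omega
  · rw [Nat.mod_eq_of_lt (a := y + N - x) (by omega)]
    rcases lt_or_ge (x + (y + N - x) / 2) N with h | h
    · rw [Nat.mod_eq_of_lt h]
      omega
    · rw [Nat.mod_eq_sub_mod h, Nat.mod_eq_of_lt (by omega)]
      omega

theorem cpred_csucc {n : ℕ} (i : Fin n) : cpred (csucc i) = i := by
  have := i.isLt
  ext
  simp only [cpred, csucc]
  rcases lt_or_ge (i.val + 1) n with h | h
  · rw [Nat.mod_eq_of_lt h, show i.val + 1 + (n - 1) = i.val + n by omega, Nat.add_mod_right,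
      Nat.mod_eq_of_lt i.isLt]
  · rw [show i.val + 1 = n by omega, Nat.mod_self, zero_add, Nat.mod_eq_of_lt (by omega)]
    omega

theorem csucc_of_lt {n : ℕ} {i : Fin n} (h : i.val + 1 < n) : (csucc i).val = i.val + 1 :=
  Nat.mod_eq_of_lt h

theorem csucc_last {n : ℕ} (h : 0 < n) : csucc (⟨n - 1, by omega⟩ : Fin n) = ⟨0, h⟩ := by
  ext
  simp [csucc, Nat.sub_add_cancel h]

theorem apply_zero_le {β : Type*} [Preorder β] {n : ℕ} {a : Fin n → β} (ha : Monotone a)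
    (hn : 0 < n) (k : Fin n) : a ⟨0, hn⟩ ≤ a k :=
  ha (Fin.mk_le_of_le_val (Nat.zero_le _))

theorem apply_le_last {β : Type*} [Preorder β] {n : ℕ} {a : Fin n → β} (ha : Monotone a)
    (hn : 0 < n) (k : Fin n) : a k ≤ a ⟨n - 1, by omega⟩ :=
  ha (Fin.le_def.2 (by have := k.isLt; simp only; omega))

theorem exists_Iav_eq_iff {N n : ℕ} (hn : 2 ≤ n) (a : Fin n → ℕ) (x : ℕ) :
    (∃ k, Iav N a k = x) ↔ ∃ k, Rav N a k = x := by
  unfold Iav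
  rw [dif_pos hn]
  split_ifs
  · rfl
  · exact ⟨fun ⟨k, hk⟩ => ⟨cpred k, hk⟩,
      fun ⟨k, hk⟩ => ⟨csucc k, by rw [rot, cpred_csucc, hk]⟩⟩

theorem exists_Rav_eq_zero_iff {N n : ℕ} (hn : 2 ≤ n) {a : Fin n → ℕ} (ha : StrictMono a)
    (haN : ∀ k, a k < N) :
    (∃ k, Rav N a k = 0) ↔ (a ⟨0, by omega⟩ = 0 ∧ a ⟨1, by omega⟩ = 1) ∨
      (a ⟨0, by omega⟩ = N - a ⟨n - 1, by omega⟩ ∨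
        a ⟨0, by omega⟩ = N - a ⟨n - 1, by omega⟩ + 1) := by
  have hsucc0 : csucc (⟨0, by omega⟩ : Fin n) = ⟨1, by omega⟩ :=
    Fin.ext (csucc_of_lt (by simp; omega))
  have h0last : a ⟨0, by omega⟩ < a ⟨n - 1, by omega⟩ := ha (Fin.mk_lt_mk.2 (by omega))
  simp only [Rav]
  constructor
  · rintro ⟨k, hk⟩
    rw [av_eq_zero_iff (haN _) (haN _)] at hk
    rcases hk with ⟨hk0, hk1⟩ | ⟨hdesc, hwrap⟩
    · have : k = ⟨0, by omega⟩ :=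
        ha.injective (by have := apply_zero_le ha.monotone (by omega) k; omega)
      rw [this, hsucc0] at hk1
      rw [this] at hk0
      have := ha (show (⟨0, by omega⟩ : Fin n) < ⟨1, by omega⟩ from Fin.mk_lt_mk.2 one_pos)
      omega
    · have : k = ⟨n - 1, by omega⟩ := by
        by_contra hne
        have hlt : k.val + 1 < n := by
          have := k.isLt; have : k.val ≠ n - 1 := fun h => hne (Fin.ext h); omega
        have := ha (show k < csucc k from Fin.lt_def.2 (by rw [csucc_of_lt hlt]; omega))
        omega
      rw [this, csucc_last (by omega)] at hwrap
      omega
  · rintro (⟨h0, h1⟩ | hwrap)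
    · refine ⟨⟨0, by omega⟩, ?_⟩
      rw [hsucc0, av_eq_zero_iff (haN _) (haN _)]
      omega
    · refine ⟨⟨n - 1, by omega⟩, ?_⟩
      rw [csucc_last (by omega), av_eq_zero_iff (haN _) (haN _)]
      omega

theorem zmod_two_eq_zero_iff_ne_one : ∀ x : ZMod 2, x = 0 ↔ x ≠ 1 := by decide

def headOnes (N : ℕ) : Finset (Fin N → ZMod 2) :=
  {v | ∀ i : Fin N, (i : ℕ) ≤ 1 → v i = 1}

def firstLastOnes (N t u : ℕ) : Finset (Fin N → ZMod 2) :=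
  {v | (∀ i : Fin N, (i : ℕ) = t ∨ (i : ℕ) = u → v i = 1) ∧
    ∀ i : Fin N, (i : ℕ) < t ∨ u < (i : ℕ) → v i = 0}

/-- Vectors whose support has wrap-around pair `(N - ⌊m/2⌋, ⌈m/2⌉)`: the pair at cyclic distance
`m` whose average is `0`. -/
def wrapOnes (N m : ℕ) : Finset (Fin N → ZMod 2) :=
  firstLastOnes N (m - m / 2) (N - m / 2)

section Enumeration

variable {N n : ℕ} {a : Fin n → ℕ} {v : Fin N → ZMod 2}
  (hv : ∀ i : Fin N, v i = 1 ↔ ∃ k, a k = i)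
include hv

theorem two_le_of_apply_eq_one {i j : Fin N} (hi : v i = 1) (hj : v j = 1) (hij : i ≠ j) :
    2 ≤ n := by
  obtain ⟨k, hk⟩ := (hv i).1 hi
  obtain ⟨k', hk'⟩ := (hv j).1 hj
  have : k ≠ k' := by rintro rfl; exact hij (Fin.ext (hk.symm.trans hk'))
  exact (by simpa using Fintype.one_lt_card_iff.2 ⟨k, k', this⟩ : 1 < n)

theorem exists_eq_zero_iff_eq_single (hN : 0 < N) (hn : n < 2) :
    (∃ k, a k = 0) ↔ v = Pi.single ⟨0, hN⟩ 1 := by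
  rw [show (∃ k, a k = 0) ↔ v ⟨0, hN⟩ = 1 from (hv ⟨0, hN⟩).symm]
  constructor
  · intro h
    funext i
    by_cases hi : i = ⟨0, hN⟩
    · rw [hi, h, Pi.single_eq_same]
    · rw [Pi.single_eq_of_ne hi, zmod_two_eq_zero_iff_ne_one]
      exact fun h' => by have := two_le_of_apply_eq_one hv h' h hi; omega
  · rintro rfl
    exact Pi.single_eq_same _ _

theorem two_le_of_mem_headOnes (hN : 2 ≤ N) (h : v ∈ headOnes N) : 2 ≤ n := by
  simp only [headOnes, mem_filter, mem_univ, true_and] at h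
  exact two_le_of_apply_eq_one hv (i := ⟨0, by omega⟩) (j := ⟨1, by omega⟩) (h _ zero_le_one)
    (h _ le_rfl) (by simp)

theorem two_le_of_mem_wrapOnes {m : ℕ} (hm : m ∈ Icc 2 (N - 1)) (h : v ∈ wrapOnes N m) :
    2 ≤ n := by
  simp only [wrapOnes, firstLastOnes, mem_filter, mem_univ, true_and, mem_Icc] at h hm
  exact two_le_of_apply_eq_one hv (i := ⟨m - m / 2, by omega⟩) (j := ⟨N - m / 2, by omega⟩)
    (h.1 _ (Or.inl rfl)) (h.1 _ (Or.inr rfl)) (by simp only [ne_eq, Fin.mk.injEq]; omega)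

variable (ha : StrictMono a) (haN : ∀ k, a k < N)
include ha haN

theorem mem_headOnes_iff (hn : 2 ≤ n) :
    v ∈ headOnes N ↔ a ⟨0, by omega⟩ = 0 ∧ a ⟨1, by omega⟩ = 1 := by
  have h01 : a ⟨0, by omega⟩ < a ⟨1, by omega⟩ := ha (Fin.mk_lt_mk.2 one_pos)
  have hN : 1 < N := by have := haN ⟨1, by omega⟩; omega
  simp only [headOnes, mem_filter, mem_univ, true_and]
  constructor
  · intro h
    obtain ⟨k₀, hk₀ : a k₀ = 0⟩ := (hv ⟨0, by omega⟩).1 (h _ zero_le_one)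
    obtain ⟨k₁, hk₁ : a k₁ = 1⟩ := (hv ⟨1, hN⟩).1 (h _ le_rfl)
    have hzero : a ⟨0, by omega⟩ = 0 := by have := apply_zero_le ha.monotone (by omega) k₀; omega
    have hk₁pos : 1 ≤ k₁.val := by
      by_contra! hk
      have : k₁ = ⟨0, by omega⟩ := Fin.ext (Nat.lt_one_iff.1 hk)
      rw [this] at hk₁
      omega
    have := ha.monotone (show (⟨1, by omega⟩ : Fin n) ≤ k₁ from Fin.le_def.2 hk₁pos)
    omega
  · rintro ⟨h0, h1⟩ i hi
    rcases Nat.le_one_iff_eq_zero_or_eq_one.1 hi with hi | hi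
    · exact (hv i).2 ⟨_, h0.trans hi.symm⟩
    · exact (hv i).2 ⟨_, h1.trans hi.symm⟩

theorem mem_firstLastOnes_iff (hn : 0 < n) {t u : ℕ} (htu : t ≤ u) (hu : u < N) :
    v ∈ firstLastOnes N t u ↔ a ⟨0, hn⟩ = t ∧ a ⟨n - 1, by omega⟩ = u := by
  have hone : ∀ k, v ⟨a k, haN k⟩ = 1 := fun k => (hv _).2 ⟨k, rfl⟩
  simp only [firstLastOnes, mem_filter, mem_univ, true_and]
  constructor
  · rintro ⟨h1, h0⟩
    have hbounds : ∀ k, t ≤ a k ∧ a k ≤ u := by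
      intro k
      by_contra hk
      exact zero_ne_one ((h0 ⟨a k, haN k⟩ (by simp only; omega)).symm.trans (hone k))
    obtain ⟨k, hk⟩ := (hv ⟨t, by omega⟩).1 (h1 _ (Or.inl rfl))
    obtain ⟨k', hk'⟩ := (hv ⟨u, hu⟩).1 (h1 _ (Or.inr rfl))
    have := apply_zero_le ha.monotone hn k
    have := apply_le_last ha.monotone hn k'
    have := hbounds ⟨0, hn⟩
    have := hbounds ⟨n - 1, by omega⟩
    simp only at hk hk'
    omega
  · rintro ⟨h0, hlast⟩
    refine ⟨fun i hi => (hv i).2 ?_, fun i hi => (zmod_two_eq_zero_iff_ne_one _).2 fun h => ?_⟩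
    · rcases hi with hi | hi
      · exact ⟨_, h0.trans hi.symm⟩
      · exact ⟨_, hlast.trans hi.symm⟩
    · obtain ⟨k, hk⟩ := (hv i).1 h
      have := apply_zero_le ha.monotone hn k
      have := apply_le_last ha.monotone hn k
      omega

theorem exists_wrapOnes_iff (hn : 2 ≤ n) :
    (∃ m ∈ Icc 2 (N - 1), v ∈ wrapOnes N m) ↔
      a ⟨0, by omega⟩ = N - a ⟨n - 1, by omega⟩ ∨
        a ⟨0, by omega⟩ = N - a ⟨n - 1, by omega⟩ + 1 := by
  have h0last : a ⟨0, by omega⟩ < a ⟨n - 1, by omega⟩ := ha (Fin.mk_lt_mk.2 (by omega))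
  have hlast := haN ⟨n - 1, by omega⟩
  constructor
  · rintro ⟨m, hm, hvm⟩
    rw [mem_Icc] at hm
    rw [wrapOnes, mem_firstLastOnes_iff hv ha haN (by omega) (by omega) (by omega)] at hvm
    omega
  · intro h
    refine ⟨a ⟨0, by omega⟩ + (N - a ⟨n - 1, by omega⟩), mem_Icc.2 (by omega), ?_⟩
    rw [wrapOnes, mem_firstLastOnes_iff hv ha haN (by omega) (by omega) (by omega)]
    omega

theorem ne_single_of_two_le (hN : 0 < N) (hn : 2 ≤ n) : v ≠ Pi.single ⟨0, hN⟩ 1 := by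
  rintro rfl
  have hzero : ∀ k, a k = 0 := fun k => by
    simpa [Pi.single_apply, Fin.ext_iff] using (hv ⟨a k, haN k⟩).2 ⟨k, rfl⟩
  have := ha (show (⟨0, by omega⟩ : Fin n) < ⟨1, by omega⟩ from Fin.mk_lt_mk.2 one_pos)
  rw [hzero, hzero] at this
  exact lt_irrefl 0 this

theorem exists_Iav_eq_zero_iff (hN : 2 ≤ N) :
    (∃ k, Iav N a k = 0) ↔
      v = Pi.single ⟨0, by omega⟩ 1 ∨ v ∈ headOnes N ∨ ∃ m ∈ Icc 2 (N - 1), v ∈ wrapOnes N m := by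
  rcases lt_or_ge n 2 with hn | hn
  · have hhead : v ∉ headOnes N := fun h => by have := two_le_of_mem_headOnes hv hN h; omega
    have hwrap : ¬ ∃ m ∈ Icc 2 (N - 1), v ∈ wrapOnes N m := fun ⟨m, hm, h⟩ => by
      have := two_le_of_mem_wrapOnes hv hm h; omega
    rw [show Iav N a = a from dif_neg (by omega), exists_eq_zero_iff_eq_single hv (by omega) hn]
    simp only [hhead, hwrap, or_false]
  · rw [exists_Iav_eq_iff hn, exists_Rav_eq_zero_iff hn ha haN, mem_headOnes_iff hv ha haN hn,
      exists_wrapOnes_iff hv ha haN hn]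
    simp only [ne_single_of_two_le hv ha haN _ hn, false_or]

end Enumeration

theorem BtoI_strictMono (N : ℕ) (v : Fin N → ZMod 2) : StrictMono (BtoI N v) :=
  fun _ _ h => ((supp N v).orderIsoOfFin rfl).strictMono h

theorem BtoI_lt (N : ℕ) (v : Fin N → ZMod 2) (k : Fin (supp N v).card) : BtoI N v k < N :=
  ((supp N v).orderIsoOfFin rfl k).1.isLt

theorem apply_eq_one_iff_exists_BtoI_eq {N : ℕ} (v : Fin N → ZMod 2) (i : Fin N) :
    v i = 1 ↔ ∃ k, BtoI N v k = i := by
  have hi : v i = 1 ↔ i ∈ supp N v := by simp [supp]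
  rw [hi]
  constructor
  · intro h
    obtain ⟨k, hk⟩ := ((supp N v).orderIsoOfFin rfl).surjective ⟨i, h⟩
    exact ⟨k, by simp [BtoI, hk]⟩
  · rintro ⟨k, hk⟩
    rw [show i = ((supp N v).orderIsoOfFin rfl k).1 from Fin.ext hk.symm]
    exact ((supp N v).orderIsoOfFin rfl k).2

theorem Bav_apply_eq_one_iff {N : ℕ} (v : Fin N → ZMod 2) (i : Fin N) :
    Bav N v i = 1 ↔ ∃ k, Iav N (BtoI N v) k = i := by
  unfold Bav ItoB
  split_ifs with h <;> simp [h]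

theorem Bav_apply_zero_eq_one_iff {N : ℕ} (hN : 2 ≤ N) (v : Fin N → ZMod 2) :
    Bav N v ⟨0, by omega⟩ = 1 ↔
      v = Pi.single ⟨0, by omega⟩ 1 ∨ v ∈ headOnes N ∨ ∃ m ∈ Icc 2 (N - 1), v ∈ wrapOnes N m :=
  (Bav_apply_eq_one_iff v _).trans <| exists_Iav_eq_zero_iff (apply_eq_one_iff_exists_BtoI_eq v)
    (BtoI_strictMono N v) (BtoI_lt N v) hN

theorem card_headOnes {N : ℕ} (hN : 2 < N) : #(headOnes N) = 2 ^ (N - 2) := by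
  have : headOnes N =
      ({v : Fin N → ZMod 2 | ∀ i ∉ Ici (⟨2, hN⟩ : Fin N), v i = (fun _ => 1) i} : Finset _) := by
    refine filter_congr fun v _ => forall_congr' fun i => ?_
    simp [Fin.le_def]
  rw [this, card_filter_forall_notMem_eq, ZMod.card, Fin.card_Ici]

theorem card_firstLastOnes {N t u : ℕ} (htu : t < u) (hu : u < N) :
    #(firstLastOnes N t u) = 2 ^ (u - t - 1) := by
  have : firstLastOnes N t u = ({v : Fin N → ZMod 2 | ∀ i ∉ Ioo (⟨t, by omega⟩ : Fin N) ⟨u, hu⟩,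
      v i = (fun i : Fin N => if (i : ℕ) = t ∨ (i : ℕ) = u then 1 else 0) i} : Finset _) := by
    refine filter_congr fun v _ => ?_
    simp only [mem_Ioo, Fin.lt_def, not_and_or, not_lt]
    constructor
    · rintro ⟨h1, h0⟩ i hi
      split_ifs with h
      · exact h1 i h
      · exact h0 i (by omega)
    · intro h
      exact ⟨fun i hi => by simpa [hi] using h i (by omega),
        fun i hi => by simpa [show ¬((i : ℕ) = t ∨ (i : ℕ) = u) by omega] using h i (by omega)⟩
  rw [this, card_filter_forall_notMem_eq, ZMod.card, Fin.card_Ioo]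

theorem card_wrapOnes {N m : ℕ} (hm : m ∈ Icc 2 (N - 1)) : #(wrapOnes N m) = 2 ^ (N - 1 - m) := by
  rw [mem_Icc] at hm
  rw [wrapOnes, card_firstLastOnes (by omega) (by omega)]
  congr 1
  omega

theorem eq_of_mem_firstLastOnes {N t u t' u' : ℕ} (ht : t < N) (ht' : t' < N) (hu : u < N)
    (hu' : u' < N) {v : Fin N → ZMod 2} (h : v ∈ firstLastOnes N t u)
    (h' : v ∈ firstLastOnes N t' u') : t = t' ∧ u = u' := by
  simp only [firstLastOnes, mem_filter, mem_univ, true_and] at h h'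
  have key : ∀ i : Fin N, v i = 1 → v i = 0 → False := fun i h1 h0 => zero_ne_one (h0.symm.trans h1)
  refine ⟨le_antisymm ?_ ?_, le_antisymm ?_ ?_⟩ <;> by_contra! hlt
  · exact key ⟨t', ht'⟩ (h'.1 _ (Or.inl rfl)) (h.2 _ (Or.inl hlt))
  · exact key ⟨t, ht⟩ (h.1 _ (Or.inl rfl)) (h'.2 _ (Or.inl hlt))
  · exact key ⟨u, hu⟩ (h.1 _ (Or.inr rfl)) (h'.2 _ (Or.inr hlt))
  · exact key ⟨u', hu'⟩ (h'.1 _ (Or.inr rfl)) (h.2 _ (Or.inr hlt))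

theorem pairwiseDisjoint_wrapOnes (N : ℕ) :
    (Icc 2 (N - 1) : Set ℕ).PairwiseDisjoint (wrapOnes N) := by
  intro m hm m' hm' hne
  simp only [coe_Icc, Set.mem_Icc] at hm hm'
  refine disjoint_left.2 fun v h h' => hne ?_
  have := eq_of_mem_firstLastOnes (by omega) (by omega) (by omega) (by omega) h h'
  omega

theorem apply_zero_eq_zero_of_mem_wrapOnes {N m : ℕ} (hm : 2 ≤ m) (hN : 0 < N)
    {v : Fin N → ZMod 2} (h : v ∈ wrapOnes N m) : v ⟨0, hN⟩ = 0 := by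
  simp only [wrapOnes, firstLastOnes, mem_filter, mem_univ, true_and] at h
  exact h.2 _ (Or.inl (by simp only; omega))

theorem sum_Icc_two_pow {N : ℕ} (hN : 2 ≤ N) :
    ∑ m ∈ Icc 2 (N - 1), 2 ^ (N - 1 - m) = 2 ^ (N - 2) - 1 := by
  rw [← Ico_add_one_right_eq_Icc, Nat.sub_add_cancel (by omega),
    sum_Ico_reflect (fun j => 2 ^ j) 2 (by omega), Nat.sub_add_cancel (by omega),
    Nat.sub_self, ← range_eq_Ico, Nat.geomSum_eq le_rfl, Nat.div_one]

theorem card_filter_Bav_zero_eq_one {N : ℕ} (hN : 3 ≤ N) :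
    #{v : Fin N → ZMod 2 | Bav N v ⟨0, Nat.zero_lt_of_lt hN⟩ = 1} = 2 ^ (N - 1) := by
  have hpartition : ({v : Fin N → ZMod 2 | Bav N v ⟨0, by omega⟩ = 1} : Finset _) =
      ({Pi.single ⟨0, by omega⟩ 1} ∪ headOnes N) ∪ (Icc 2 (N - 1)).biUnion (wrapOnes N) := by
    ext v
    simp only [mem_filter, mem_univ, true_and, Bav_apply_zero_eq_one_iff (show 2 ≤ N by omega),
      mem_union, mem_singleton, mem_biUnion, or_assoc]
  have hsingle : Pi.single ⟨0, by omega⟩ 1 ∉ headOnes N := fun h => by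
    simp only [headOnes, mem_filter, mem_univ, true_and] at h
    simpa [Pi.single_apply, Fin.ext_iff] using h ⟨1, by omega⟩ le_rfl
  have hwrap : Disjoint ({Pi.single ⟨0, by omega⟩ 1} ∪ headOnes N)
      ((Icc 2 (N - 1)).biUnion (wrapOnes N)) := by
    refine disjoint_left.2 fun v hv hv' => ?_
    obtain ⟨m, hm, hvm⟩ := mem_biUnion.1 hv'
    have hv0 : v ⟨0, by omega⟩ = 1 := by
      rcases mem_union.1 hv with h | h
      · rw [mem_singleton.1 h, Pi.single_eq_same]
      · simp only [headOnes, mem_filter, mem_univ, true_and] at h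
        exact h _ zero_le_one
    rw [apply_zero_eq_zero_of_mem_wrapOnes (mem_Icc.1 hm).1 _ hvm] at hv0
    exact zero_ne_one hv0
  rw [hpartition, card_union_of_disjoint hwrap, card_union_of_disjoint
    (disjoint_singleton_left.2 hsingle), card_singleton, card_headOnes (by omega),
    card_biUnion (pairwiseDisjoint_wrapOnes N), sum_congr rfl fun m hm => card_wrapOnes hm,
    sum_Icc_two_pow (by omega)]
  have : 2 ^ (N - 1) = 2 * 2 ^ (N - 2) := by rw [← pow_succ']; congr 1; omega
  have := Nat.one_le_two_pow (n := N - 2)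
  omega

end Rhythm

open Rhythm in
/-- For every `N ≥ 3`, the Boolean function `Bav_N^0 : F_2^N → F_2` is balanced: the number
of `v ∈ F_2^N` with `Bav_N^0(v) = 1` equals `2^{N−1}`, and so does the number of `v` with
`Bav_N^0(v) = 0`. -/
theorem Bav_zero_balanced (N : ℕ) (hN : 3 ≤ N) :
    (Finset.univ.filter fun v : Fin N → ZMod 2 => Bav N v ⟨0, by omega⟩ = 1).card =
      2 ^ (N - 1) ∧
    (Finset.univ.filter fun v : Fin N → ZMod 2 => Bav N v ⟨0, by omega⟩ = 0).card =
      2 ^ (N - 1) := by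
  have hone := card_filter_Bav_zero_eq_one hN
  refine ⟨hone, ?_⟩
  have htotal := Finset.card_filter_add_card_filter_not (s := Finset.univ)
    fun v : Fin N → ZMod 2 => Bav N v ⟨0, by omega⟩ = 1
  simp only [← ne_eq, ← zmod_two_eq_zero_iff_ne_one] at htotal
  rw [hone, Finset.card_univ, Fintype.card_fun, ZMod.card, Fintype.card_fin] at htotal
  have : 2 ^ N = 2 * 2 ^ (N - 1) := by rw [← pow_succ']; congr 1; omega
  omega
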